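/- Let A be a completely positive 5×5 matrix that is invertible, has all entries strictly positive, and satisfies trace(Aᵀ H) = 0, where H is the Horn matrix. Then there exist strictly positive real numbers y₁, y₂, y₃, y₄, y₅ and z₁, z₂, z₃, z₄, z₅ such that A = BBᵀ, where B = B(y) · diag(z₁,…,z₅) and B(y) is the 5×5 matrix with rows (1, 0, 0, y₄, y₅+1), (y₁+1, 1, 0, 0, y₅), (y₁, y₂+1, 1, 0, 0), (0, y₂, y₃+1, 1, 0), (0, 0, y₃, y₄+1, 1). -/

import Mathlib

/-!
With `uₘ = eₘ + eₘ₊₁` (indices mod 5), the Horn form becomes a sum of three nonnegative terms on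
the nonnegative orthant once the coordinates are rotated so that a minimal one comes first; hence a
nonnegative zero of it is a combination of two consecutive vectors `uₘ, uₘ₊₁`. Writing `A = BBᵀ`,
each column of `B` is such a zero, and grouping the columns by `m` gives
`A = ∑ₘ [uₘ uₘ₊₁] Gₘ [uₘ uₘ₊₁]ᵀ` with Gram matrices `Gₘ = [[Pₘ, Qₘ], [Qₘ, Rₘ]]`, so
`Qₘ² ≤ PₘRₘ`; the entry `A (m, m+2)` equals `Qₘ`, hence `Qₘ > 0`.

Such a sum depends only on the `Qₘ` and on the sums `Pₘ₊₁ + Rₘ`. The `m`-th column of `B(y)` is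
`uₘ + yₘ uₘ₊₁`, so `B(y) diag(z)` realises it as soon as `sₘ = zₘ²` satisfies `sₘ yₘ = Qₘ` and
`sₘ₊₁ + Qₘ² / sₘ = Pₘ₊₁ + Rₘ` around the cycle. The maps `t ↦ Pₘ₊₁ + Rₘ - Qₘ² / t` send
`[Pₘ, ∞)` into `[Pₘ₊₁, Pₘ₊₁ + Rₘ]`, so their composite around the cycle has a fixed point by the
intermediate value theorem, and its orbit is the required `s`.
-/

open Matrix

/-- The Horn matrix. -/
def Horn : Matrix (Fin 5) (Fin 5) ℝ :=
  !![1, -1,  1,  1, -1;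
    -1,  1, -1,  1,  1;
     1, -1,  1, -1,  1;
     1,  1, -1,  1, -1;
    -1,  1,  1, -1,  1]

/-- The matrix `B(y)` from the parametrization of the Horn locus
(with `y₁ = y 0, …, y₅ = y 4`). -/
def Bmat (y : Fin 5 → ℝ) : Matrix (Fin 5) (Fin 5) ℝ :=
  !![1, 0, 0, y 3, y 4 + 1;
     y 0 + 1, 1, 0, 0, y 4;
     y 0, y 1 + 1, 1, 0, 0;
     0, y 1, y 2 + 1, 1, 0;
     0, 0, y 2, y 3 + 1, 1]

lemma trace_mul_transpose_transpose_mul {R k n : Type*} [CommSemiring R] [Fintype k] [Fintype n]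
    (B : Matrix n k R) (M : Matrix n n R) :
    trace ((B * Bᵀ)ᵀ * M) = ∑ j, Bᵀ j ⬝ᵥ M *ᵥ Bᵀ j := by
  rw [transpose_mul, transpose_transpose, Matrix.mul_assoc, trace_mul_comm]
  simp only [trace, diag, mul_apply, transpose_apply, dotProduct, mulVec, Finset.sum_mul,
    Finset.mul_sum]
  simp_rw [mul_assoc]
  exact Finset.sum_congr rfl fun j _ => Finset.sum_comm

section EdgeForm

variable {n : ℕ} [NeZero n]

def edgeVec (m : Fin n) : Fin n → ℝ := Pi.single m 1 + Pi.single (m + 1) 1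

lemma edgeVec_add_apply (k m j : Fin n) : edgeVec (k + m) (k + j) = edgeVec m j := by
  simp [edgeVec, Pi.single_apply, add_assoc]

/-- `∑ₘ [uₘ uₘ₊₁] [[Pₘ, Qₘ], [Qₘ, Rₘ]] [uₘ uₘ₊₁]ᵀ` with `uₘ = edgeVec m`. -/
def edgeForm (P Q R : Fin n → ℝ) : Matrix (Fin n) (Fin n) ℝ :=
  of fun l i => ∑ m, (P m * edgeVec m l * edgeVec m i
    + Q m * (edgeVec m l * edgeVec (m + 1) i + edgeVec (m + 1) l * edgeVec m i)
    + R m * edgeVec (m + 1) l * edgeVec (m + 1) i)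

lemma edgeForm_apply (P Q R : Fin n → ℝ) (l i : Fin n) :
    edgeForm P Q R l i = ∑ m, (P m * edgeVec m l * edgeVec m i
      + Q m * (edgeVec m l * edgeVec (m + 1) i + edgeVec (m + 1) l * edgeVec m i)
      + R m * edgeVec (m + 1) l * edgeVec (m + 1) i) := rfl

lemma edgeForm_congr {P Q R P' R' : Fin n → ℝ} (h : ∀ m, P (m + 1) + R m = P' (m + 1) + R' m) :
    edgeForm P Q R = edgeForm P' Q R' := by
  ext l i
  have shift : ∀ S : Fin n → ℝ, ∑ m, S m * edgeVec (m + 1) l * edgeVec (m + 1) i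
      = ∑ m, S (m - 1) * edgeVec m l * edgeVec m i := fun S =>
    Fintype.sum_equiv (Equiv.addRight 1) _ _ (by simp)
  have key : ∑ m, (P m + R (m - 1)) * edgeVec m l * edgeVec m i
      = ∑ m, (P' m + R' (m - 1)) * edgeVec m l * edgeVec m i := by
    refine Finset.sum_congr rfl fun m _ => ?_
    simpa using congrArg (· * edgeVec m l * edgeVec m i) (h (m - 1))
  simp only [edgeForm_apply, Finset.sum_add_distrib, shift, add_mul] at key ⊢
  linarith

lemma mul_transpose_eq_edgeForm {k : Type*} [Fintype k]
    (B : Matrix (Fin n) k ℝ) (t : k → Fin n) (α β : k → ℝ)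
    (hB : ∀ j, Bᵀ j = α j • edgeVec (t j) + β j • edgeVec (t j + 1)) :
    B * Bᵀ = edgeForm (fun m => ∑ j with t j = m, α j ^ 2) (fun m => ∑ j with t j = m, α j * β j)
      (fun m => ∑ j with t j = m, β j ^ 2) := by
  ext l i
  rw [mul_apply, edgeForm_apply, ← Finset.sum_fiberwise Finset.univ t]
  refine Finset.sum_congr rfl fun m _ => ?_
  simp only [Finset.sum_mul, ← Finset.sum_add_distrib]
  refine Finset.sum_congr rfl fun j hj => ?_
  rw [← transpose_apply B j l, hB, (Finset.mem_filter.1 hj).2]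
  simp only [Pi.add_apply, Pi.smul_apply, smul_eq_mul]
  ring

end EdgeForm

lemma horn_quadForm_eq (x : Fin 5 → ℝ) (k : Fin 5) :
    x ⬝ᵥ Horn *ᵥ x = (x (k + 2) - x (k + 3) + x (k + 4) + x k - x (k + 1)) ^ 2
      + 4 * (x (k + 3) * x k) + 4 * (x (k + 4) * (x (k + 1) - x k)) := by
  fin_cases k <;> simp [Horn, dotProduct, mulVec, Fin.sum_univ_five] <;> ring

lemma horn_quadForm_nonneg {x : Fin 5 → ℝ} (hx : ∀ i, 0 ≤ x i) : 0 ≤ x ⬝ᵥ Horn *ᵥ x := by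
  obtain ⟨k, hk⟩ := Finite.exists_min x
  rw [horn_quadForm_eq x k]
  have := mul_nonneg (hx (k + 3)) (hx k)
  have := mul_nonneg (hx (k + 4)) (sub_nonneg.2 (hk (k + 1)))
  positivity

lemma exists_eq_edgeVec_combination_of_horn_terms_eq_zero {x : Fin 5 → ℝ} (hx : ∀ i, 0 ≤ x i)
    (h₀ : x 2 - x 3 + x 4 + x 0 - x 1 = 0) (h₁ : x 3 * x 0 = 0) (h₂ : x 4 * (x 1 - x 0) = 0) :
    ∃ (m : Fin 5) (a b : ℝ), x = a • edgeVec m + b • edgeVec (m + 1) := by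
  have := hx 2; have := hx 4
  rcases mul_eq_zero.1 h₁ with h₃ | h₀'
  · have h₄ : x 4 = 0 := by nlinarith
    refine ⟨0, x 0, x 2, funext fun l => ?_⟩
    fin_cases l <;> simp [edgeVec] <;> linarith
  rcases mul_eq_zero.1 h₂ with h₄ | h₁'
  · refine ⟨1, x 1, x 3, funext fun l => ?_⟩
    fin_cases l <;> simp [edgeVec] <;> linarith
  · refine ⟨2, x 2, x 4, funext fun l => ?_⟩
    fin_cases l <;> simp [edgeVec] <;> linarith

lemma exists_eq_edgeVec_combination_of_horn_quadForm_eq_zero {x : Fin 5 → ℝ} (hx : ∀ i, 0 ≤ x i)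
    (h : x ⬝ᵥ Horn *ᵥ x = 0) :
    ∃ (m : Fin 5) (a b : ℝ), x = a • edgeVec m + b • edgeVec (m + 1) := by
  obtain ⟨k, hk⟩ := Finite.exists_min x
  rw [horn_quadForm_eq x k] at h
  have := mul_nonneg (hx (k + 3)) (hx k)
  have := mul_nonneg (hx (k + 4)) (sub_nonneg.2 (hk (k + 1)))
  obtain ⟨m, a, b, hrot⟩ :=
    exists_eq_edgeVec_combination_of_horn_terms_eq_zero (x := fun j => x (k + j)) (fun j => hx _) (by simp only [add_zero]; nlinarith) (by simp only [add_zero]; nlinarith)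
    (by simp only [add_zero]; nlinarith)
  refine ⟨k + m, a, b, funext fun l => ?_⟩
  simpa [← edgeVec_add_apply k _ (l - k), add_assoc] using congrFun hrot (l - k)

lemma exists_edgeForm_of_trace_horn_eq_zero {k : Type*} [Fintype k] (B : Matrix (Fin 5) k ℝ)
    (hB : ∀ i j, 0 ≤ B i j) (h : trace ((B * Bᵀ)ᵀ * Horn) = 0) :
    ∃ P Q R : Fin 5 → ℝ, (∀ m, 0 ≤ P m) ∧ (∀ m, Q m ^ 2 ≤ P m * R m) ∧ B * Bᵀ = edgeForm P Q R := by
  rw [trace_mul_transpose_transpose_mul] at h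
  have hcol : ∀ j, Bᵀ j ⬝ᵥ Horn *ᵥ Bᵀ j = 0 := fun j =>
    (Finset.sum_eq_zero_iff_of_nonneg fun j _ => horn_quadForm_nonneg fun i => hB i j).1 h j
      (Finset.mem_univ j)
  choose t α β hcol using fun j => exists_eq_edgeVec_combination_of_horn_quadForm_eq_zero
    (fun i => hB i j) (hcol j)
  exact ⟨_, _, _, fun m => Finset.sum_nonneg fun j _ => sq_nonneg (α j),
    fun m => Finset.sum_mul_sq_le_sq_mul_sq _ α β, mul_transpose_eq_edgeForm B t α β hcol⟩

lemma edgeForm_apply_add_two (P Q R : Fin 5 → ℝ) (m : Fin 5) : edgeForm P Q R m (m + 2) = Q m := by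
  fin_cases m <;> simp [edgeForm_apply, edgeVec, Fin.sum_univ_five, Pi.single_apply]

lemma Bmat_apply (y : Fin 5 → ℝ) (l m : Fin 5) :
    Bmat y l m = edgeVec m l + y m * edgeVec (m + 1) l := by
  fin_cases l <;> fin_cases m <;> simp [Bmat, edgeVec] <;> ring

lemma Bmat_mul_diagonal_mul_transpose (y z : Fin 5 → ℝ) :
    (Bmat y * diagonal z) * (Bmat y * diagonal z)ᵀ =
      edgeForm (z ^ 2) (z ^ 2 * y) (z ^ 2 * y ^ 2) := by
  ext l i
  rw [mul_apply]
  simp only [transpose_apply, mul_diagonal, edgeForm_apply, Bmat_apply, Pi.mul_apply,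
    Pi.pow_apply]
  exact Finset.sum_congr rfl fun m _ => by ring

open Set in
lemma exists_pos_cyclic_solution (P Q R : Fin 5 → ℝ) (hP : ∀ m, 0 < P m)
    (hQR : ∀ m, Q m ^ 2 ≤ P m * R m) :
    ∃ s : Fin 5 → ℝ, (∀ m, 0 < s m) ∧ ∀ m, s (m + 1) + Q m ^ 2 / s m = P (m + 1) + R m := by
  set f : Fin 5 → ℝ → ℝ := fun m t => P (m + 1) + R m - Q m ^ 2 / t with hf
  have hmaps : ∀ m, MapsTo (f m) (Ici (P m)) (Ici (P (m + 1))) := fun m t ht => by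
    have hR : 0 ≤ R m := nonneg_of_mul_nonneg_right ((sq_nonneg _).trans (hQR m)) (hP m)
    have : Q m ^ 2 / t ≤ R m :=
      div_le_of_le_mul₀ ((hP m).trans_le ht).le hR (by nlinarith [hQR m, mem_Ici.1 ht])
    simp only [mem_Ici, f] at ht ⊢
    linarith
  have hcont : ∀ m, ContinuousOn (f m) (Ici (P m)) := fun m =>
    continuousOn_const.sub <| continuousOn_const.div continuousOn_id fun t ht =>
      ((hP m).trans_le ht).ne'
  have hle : ∀ m, ∀ t ∈ Ici (P m), f m t ≤ P (m + 1) + R m := fun m t ht =>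
    sub_le_self _ (div_nonneg (sq_nonneg _) ((hP m).trans_le ht).le)
  have h₁ := (hmaps 1).comp (hmaps 0)
  have h₂ := (hmaps 2).comp h₁
  have h₃ := (hmaps 3).comp h₂
  set g := f 4 ∘ f 3 ∘ f 2 ∘ f 1 ∘ f 0
  have hgcont : ContinuousOn g (Ici (P 0)) :=
    (hcont 4).comp ((hcont 3).comp ((hcont 2).comp ((hcont 1).comp (hcont 0) (hmaps 0)) h₁) h₂) h₃
  have hgmaps : MapsTo g (Icc (P 0) (P 0 + R 4)) (Icc (P 0) (P 0 + R 4)) := fun t ht =>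
    ⟨(hmaps 4).comp h₃ ht.1, hle 4 _ (h₃ ht.1)⟩
  obtain ⟨t, ht, hfix⟩ := exists_mem_Icc_isFixedPt_of_mapsTo (hgcont.mono Icc_subset_Ici_self)
    ((hmaps 4).comp h₃ self_mem_Ici |>.trans (hle 4 _ (h₃ self_mem_Ici))) hgmaps
  set s : Fin 5 → ℝ := ![t, f 0 t, f 1 (f 0 t), f 2 (f 1 (f 0 t)), f 3 (f 2 (f 1 (f 0 t)))]
  have hs_mem : ∀ m, s m ∈ Ici (P m) := by
    intro m
    fin_cases m
    exacts [ht.1, hmaps 0 ht.1, h₁ ht.1, h₂ ht.1, h₃ ht.1]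
  have hs_succ : ∀ m, s (m + 1) = f m (s m) := by
    intro m
    fin_cases m
    exacts [rfl, rfl, rfl, rfl, hfix.symm]
  refine ⟨s, fun m => (hP m).trans_le (hs_mem m), fun m => ?_⟩
  rw [hs_succ, hf]
  ring

theorem horn_locus_factorization_general (A : Matrix (Fin 5) (Fin 5) ℝ)
    (hcp : ∃ (k : ℕ) (B : Matrix (Fin 5) (Fin k) ℝ), (∀ i j, 0 ≤ B i j) ∧ A = B * Bᵀ)
    (hpos : ∀ i j, 0 < A i j)
    (horth : Matrix.trace (Aᵀ * Horn) = 0) :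
    ∃ y z : Fin 5 → ℝ, (∀ i, 0 < y i) ∧ (∀ i, 0 < z i) ∧
      A = (Bmat y * diagonal z) * (Bmat y * diagonal z)ᵀ := by
  obtain ⟨k, B, hB, rfl⟩ := hcp
  obtain ⟨P, Q, R, hP, hQR, hA⟩ := exists_edgeForm_of_trace_horn_eq_zero B hB horth
  have hQ : ∀ m, 0 < Q m := fun m => by simpa [hA, edgeForm_apply_add_two] using hpos m (m + 2)
  have hP' : ∀ m, 0 < P m := fun m => (hP m).lt_of_ne' fun h =>
    (pow_pos (hQ m) 2).not_ge ((hQR m).trans_eq (by rw [h, zero_mul]))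
  obtain ⟨s, hs, hcyc⟩ := exists_pos_cyclic_solution P Q R hP' hQR
  refine ⟨Q / s, fun m => √(s m), fun m => div_pos (hQ m) (hs m),
    fun m => Real.sqrt_pos.2 (hs m), ?_⟩
  have hz : (fun m => √(s m)) ^ 2 = s := funext fun m => Real.sq_sqrt (hs m).le
  have hsQ : s * (Q / s) = Q := funext fun m => mul_div_cancel₀ _ (hs m).ne'
  rw [hA, Bmat_mul_diagonal_mul_transpose, hz, hsQ]
  refine edgeForm_congr fun m => ?_
  rw [← hcyc m, Pi.mul_apply, Pi.pow_apply, Pi.div_apply]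
  field_simp [(hs m).ne']

/-- a completely positive, invertible, entrywise positive matrix orthogonal to the
Horn matrix has a cp-factorization of the form `B(y) · diag(z)`. -/
theorem horn_locus_factorization (A : Matrix (Fin 5) (Fin 5) ℝ)
    (hcp : ∃ (k : ℕ) (B : Matrix (Fin 5) (Fin k) ℝ), (∀ i j, 0 ≤ B i j) ∧ A = B * Bᵀ)
    (hinv : IsUnit A) (hpos : ∀ i j, 0 < A i j)
    (horth : Matrix.trace (Aᵀ * Horn) = 0) :
    ∃ y z : Fin 5 → ℝ, (∀ i, 0 < y i) ∧ (∀ i, 0 < z i) ∧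
      A = (Bmat y * diagonal z) * (Bmat y * diagonal z)ᵀ :=
  horn_locus_factorization_general A hcp hpos horth
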